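/- Let (Ω, μ) be a measure space and 1 < p < ∞. If a bounded operator T : L^p(Ω) → L^p(Ω) admits a loose dilation, then T is p-polynomially bounded; that is, there exists a constant C ≥ 1 such that ‖φ(T)‖_{B(L^p(Ω))} ≤ C ‖φ(S)‖_{B(ℓ^p(ℤ))} for every complex polynomial φ, where S is the shift operator on ℓ^p(ℤ). -/

import Mathlib

open MeasureTheory Polynomial
open scoped ENNReal

/-- The map `k ↦ k - 1` preserves the counting measure on `ℤ`. -/
theorem shift_measurePreserving :
    MeasurePreserving (fun k : ℤ => k - 1) Measure.count Measure.count := by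
  constructor
  · exact Measurable.of_discrete
  · ext s hs
    rw [Measure.map_apply Measurable.of_discrete hs]
    have h : (fun k : ℤ => k - 1) ⁻¹' s = (fun k : ℤ => k + 1) '' s := by
      ext k
      constructor
      · intro hk; exact ⟨k - 1, hk, by ring⟩
      · rintro ⟨a, ha, rfl⟩; simpa using ha
    rw [h, Measure.count_injective_image (fun a b hab => by simpa using hab)]

/-- The shift operator `S` on `ℓ^p(ℤ)`, realized as `L^p` of the counting measure on `ℤ`:
`(S t) k = t (k - 1)`. -/
noncomputable def shiftOp (P : ℝ≥0∞) [Fact (1 ≤ P)] :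
    Lp ℂ P (Measure.count : Measure ℤ) →L[ℂ] Lp ℂ P (Measure.count : Measure ℤ) :=
  (Lp.compMeasurePreservingₗᵢ ℂ (fun k : ℤ => k - 1) shift_measurePreserving).toContinuousLinearMap

/-- `T` admits a loose dilation: `T^n = Q U^n J` with `J, Q` bounded and `U` an isomorphism
with `(U^n)_{n ∈ ℤ}` bounded, on `L^p` of some other measure space. -/
def LooseDilation (P : ℝ≥0∞) [Fact (1 ≤ P)] {Ω : Type*} [MeasurableSpace Ω] {μ : Measure Ω}
    (T : Lp ℂ P μ →L[ℂ] Lp ℂ P μ) : Prop :=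
  ∃ (Ω' : Type) (_ : MeasurableSpace Ω') (μ' : Measure Ω')
    (J : Lp ℂ P μ →L[ℂ] Lp ℂ P μ') (Q : Lp ℂ P μ' →L[ℂ] Lp ℂ P μ)
    (U : Lp ℂ P μ' ≃L[ℂ] Lp ℂ P μ'),
      (∃ K : ℝ, ∀ n : ℤ, ‖((U ^ n).toContinuousLinearMap)‖ ≤ K) ∧
      ∀ n : ℕ, (T ^ n) = Q.comp (((U ^ (n : ℤ)).toContinuousLinearMap).comp J)

/- ----------------------------------------------------------------------- -/
/- Auxiliary lemmas for the proof of `stmt_9`.                              -/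
/- ----------------------------------------------------------------------- -/

section Aux

/-- Almost-everywhere equality w.r.t. the counting measure is equality. -/
lemma count_ae_eq {α β : Type*} [MeasurableSpace α] {f g : α → β}
    (h : f =ᵐ[Measure.count] g) : f = g := by
  funext k
  by_contra hk
  have h0 : (Measure.count : Measure α) {x | ¬ f x = g x} = 0 := ae_iff.mp h
  rw [Measure.count_eq_zero_iff] at h0
  exact (Set.eq_empty_iff_forall_notMem.mp h0 k) hk

variable {p : ℝ}

/-- The `p`-th power of the norm of an `L^p` element as a lower integral. -/
lemma lintegral_rpow_eq (hp0 : 0 < p) {α : Type*} [MeasurableSpace α] {ν : Measure α}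
    [Fact (1 ≤ ENNReal.ofReal p)] (g : Lp ℂ (ENNReal.ofReal p) ν) :
    ∫⁻ a, (‖g a‖₊ : ℝ≥0∞) ^ p ∂ν = (‖g‖₊ : ℝ≥0∞) ^ p := by
  have hne : (ENNReal.ofReal p) ≠ 0 := by
    simp only [ne_eq, ENNReal.ofReal_eq_zero, not_le]; exact hp0
  have h1 : eLpNorm (⇑g) (ENNReal.ofReal p) ν
      = (∫⁻ a, (‖g a‖₊ : ℝ≥0∞) ^ p ∂ν) ^ (1/p) := by
    rw [eLpNorm_eq_lintegral_rpow_enorm_toReal hne ENNReal.ofReal_ne_top,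
      ENNReal.toReal_ofReal hp0.le]
    rfl
  have h2 : (‖g‖₊ : ℝ≥0∞) = eLpNorm (⇑g) (ENNReal.ofReal p) ν := by
    rw [Lp.nnnorm_def, ENNReal.coe_toNNReal (Lp.eLpNorm_ne_top g)]
  rw [h2, h1, ← ENNReal.rpow_mul, one_div, inv_mul_cancel₀ hp0.ne', ENNReal.rpow_one]

/-- Same, as a `tsum`, for the counting measure on `ℤ`. -/
lemma tsum_rpow_eq (hp0 : 0 < p) [Fact (1 ≤ ENNReal.ofReal p)]
    (g : Lp ℂ (ENNReal.ofReal p) (Measure.count : Measure ℤ)) :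
    ∑' k : ℤ, (‖g k‖₊ : ℝ≥0∞) ^ p = (‖g‖₊ : ℝ≥0∞) ^ p := by
  rw [← lintegral_count]
  exact lintegral_rpow_eq hp0 g

/-- A finitely supported function is in `L^p` of the counting measure. -/
lemma memLp_of_support (hp0 : 0 < p) (c : ℤ → ℂ) (s : Finset ℤ)
    (hc : ∀ k ∉ s, c k = 0) :
    MemLp c (ENNReal.ofReal p) (Measure.count : Measure ℤ) := by
  have hne : (ENNReal.ofReal p) ≠ 0 := by
    simp only [ne_eq, ENNReal.ofReal_eq_zero, not_le]; exact hp0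
  refine ⟨(Measurable.of_discrete (f := c)).stronglyMeasurable.aestronglyMeasurable, ?_⟩
  rw [eLpNorm_eq_lintegral_rpow_enorm_toReal hne ENNReal.ofReal_ne_top,
    ENNReal.toReal_ofReal hp0.le, lintegral_count]
  rw [tsum_eq_sum (s := s)
    (fun k hk => by simp [hc k hk, ENNReal.zero_rpow_of_pos hp0])]
  refine ENNReal.rpow_lt_top_of_nonneg (by positivity) ?_
  refine (ENNReal.sum_lt_top.mpr fun k _ => ?_).ne
  exact ENNReal.rpow_lt_top_of_nonneg hp0.le ENNReal.coe_ne_top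

/-- `coeFn` of a finite linear combination in `L^p`, almost everywhere. -/
lemma coeFn_lp_smul_sum {α : Type*} [MeasurableSpace α] {ν : Measure α}
    {P : ℝ≥0∞} {ι : Type*} (t : Finset ι) (b : ι → ℂ) (h : ι → Lp ℂ P ν) :
    ⇑(∑ i ∈ t, b i • h i) =ᵐ[ν] fun ω => ∑ i ∈ t, b i • (h i) ω := by
  classical
  induction t using Finset.induction_on with
  | empty => simp only [Finset.sum_empty]; exact Lp.coeFn_zero ℂ P ν
  | insert a t hnot ih =>
    rw [Finset.sum_insert hnot]
    filter_upwards [Lp.coeFn_add (b a • h a) (∑ i ∈ t, b i • h i),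
      Lp.coeFn_smul (b a) (h a), ih] with ω h1 h2 h3
    simp only [Finset.sum_insert hnot, h1, Pi.add_apply, h2, Pi.smul_apply, h3]

end Aux

section Scalar

variable {p : ℝ}

/-- The scalar convolution inequality coming from the boundedness of `φ(S)` on `ℓ^p(ℤ)`. -/
lemma scalar_minus (hp : 1 < p) [Fact (1 ≤ ENNReal.ofReal p)] (φ : Polynomial ℂ)
    (c : ℤ → ℂ) (s : Finset ℤ) (hc : ∀ k ∉ s, c k = 0) :
    ∑' k : ℤ, (‖∑ n ∈ Finset.range (φ.natDegree + 1), φ.coeff n • c (k - n)‖₊ : ℝ≥0∞) ^ p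
      ≤ (‖aeval (shiftOp (ENNReal.ofReal p)) φ‖₊ : ℝ≥0∞) ^ p
        * ∑' k : ℤ, (‖c k‖₊ : ℝ≥0∞) ^ p := by
  have hp0 : 0 < p := lt_trans one_pos hp
  set P := ENNReal.ofReal p with hP
  have hmem : MemLp c P (Measure.count : Measure ℤ) := memLp_of_support hp0 c s hc
  set g : Lp ℂ P (Measure.count : Measure ℤ) := hmem.toLp c with hgdef
  have hg : ⇑g = c := count_ae_eq hmem.coeFn_toLp
  have hshift : ∀ h : Lp ℂ P (Measure.count : Measure ℤ),
      ⇑(shiftOp P h) = fun k => h (k - 1) := by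
    intro h
    exact count_ae_eq (Lp.coeFn_compMeasurePreserving h shift_measurePreserving)
  have hpow : ∀ (n : ℕ) (h : Lp ℂ P (Measure.count : Measure ℤ)),
      ⇑(((shiftOp P) ^ n) h) = fun k => h (k - (n : ℤ)) := by
    intro n
    induction n with
    | zero => intro h; simp [pow_zero]
    | succ n ih =>
      intro h
      rw [pow_succ, ContinuousLinearMap.mul_apply, ih ((shiftOp P) h), hshift h]
      funext k
      simp only []
      congr 1
      push_cast
      ring
  have hsum : ⇑((aeval (shiftOp P) φ) g)
      = fun k => ∑ n ∈ Finset.range (φ.natDegree + 1), φ.coeff n • c (k - n) := by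
    rw [aeval_eq_sum_range, ContinuousLinearMap.sum_apply]
    have h1 : (∑ i ∈ Finset.range (φ.natDegree + 1), (φ.coeff i • (shiftOp P) ^ i) g)
        = ∑ i ∈ Finset.range (φ.natDegree + 1), φ.coeff i • (((shiftOp P) ^ i) g) := by
      refine Finset.sum_congr rfl fun i _ => ?_
      rw [ContinuousLinearMap.smul_apply]
    rw [h1, count_ae_eq (coeFn_lp_smul_sum _ _ _)]
    funext k
    refine Finset.sum_congr rfl fun i _ => ?_
    rw [hpow i g, hg]
  have key : (‖(aeval (shiftOp P) φ) g‖₊ : ℝ≥0∞)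
      ≤ (‖aeval (shiftOp P) φ‖₊ : ℝ≥0∞) * (‖g‖₊ : ℝ≥0∞) := by
    exact_mod_cast (aeval (shiftOp P) φ).le_opNNNorm g
  calc ∑' k : ℤ, (‖∑ n ∈ Finset.range (φ.natDegree + 1), φ.coeff n • c (k - n)‖₊ : ℝ≥0∞) ^ p
      = ∑' k : ℤ, (‖((aeval (shiftOp P) φ) g) k‖₊ : ℝ≥0∞) ^ p := by rw [hsum]
    _ = (‖(aeval (shiftOp P) φ) g‖₊ : ℝ≥0∞) ^ p := tsum_rpow_eq hp0 _
    _ ≤ ((‖aeval (shiftOp P) φ‖₊ : ℝ≥0∞) * (‖g‖₊ : ℝ≥0∞)) ^ p :=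
        ENNReal.rpow_le_rpow key hp0.le
    _ = (‖aeval (shiftOp P) φ‖₊ : ℝ≥0∞) ^ p * ((‖g‖₊ : ℝ≥0∞)) ^ p :=
        ENNReal.mul_rpow_of_nonneg _ _ hp0.le
    _ = (‖aeval (shiftOp P) φ‖₊ : ℝ≥0∞) ^ p * ∑' k : ℤ, (‖c k‖₊ : ℝ≥0∞) ^ p := by
        rw [← tsum_rpow_eq hp0 g, hg]

/-- Reflected version: convolution with `+` instead of `-`. -/
lemma scalar_plus (hp : 1 < p) [Fact (1 ≤ ENNReal.ofReal p)] (φ : Polynomial ℂ)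
    (c : ℤ → ℂ) (s : Finset ℤ) (hc : ∀ k ∉ s, c k = 0) :
    ∑' k : ℤ, (‖∑ n ∈ Finset.range (φ.natDegree + 1), φ.coeff n • c (k + n)‖₊ : ℝ≥0∞) ^ p
      ≤ (‖aeval (shiftOp (ENNReal.ofReal p)) φ‖₊ : ℝ≥0∞) ^ p
        * ∑' k : ℤ, (‖c k‖₊ : ℝ≥0∞) ^ p := by
  classical
  have h := scalar_minus hp φ (fun k => c (-k)) (s.image Neg.neg) (by
    intro k hk
    refine hc (-k) fun hmem => hk ?_
    simpa using Finset.mem_image_of_mem Neg.neg hmem)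
  have e1 : ∀ f : ℤ → ℝ≥0∞, ∑' k : ℤ, f (-k) = ∑' k : ℤ, f k := fun f =>
    (Equiv.neg ℤ).tsum_eq f
  have hL : (∑' k : ℤ,
      (‖∑ n ∈ Finset.range (φ.natDegree + 1), φ.coeff n • c (k + n)‖₊ : ℝ≥0∞) ^ p)
      = ∑' k : ℤ, (‖∑ n ∈ Finset.range (φ.natDegree + 1),
          φ.coeff n • (fun j : ℤ => c (-j)) (k - n)‖₊ : ℝ≥0∞) ^ p := by
    rw [← e1 (fun k => (‖∑ n ∈ Finset.range (φ.natDegree + 1),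
      φ.coeff n • (fun j : ℤ => c (-j)) (k - n)‖₊ : ℝ≥0∞) ^ p)]
    refine tsum_congr fun k => ?_
    have hx : (∑ n ∈ Finset.range (φ.natDegree + 1), φ.coeff n • c (k + n))
        = ∑ n ∈ Finset.range (φ.natDegree + 1), φ.coeff n • c (-(-k - n)) := by
      refine Finset.sum_congr rfl fun n _ => ?_
      congr 1
      ring
    simp only []
    rw [hx]
  have hR : (∑' k : ℤ, (‖(fun j : ℤ => c (-j)) k‖₊ : ℝ≥0∞) ^ p)
      = ∑' k : ℤ, (‖c k‖₊ : ℝ≥0∞) ^ p := e1 (fun k => (‖c k‖₊ : ℝ≥0∞) ^ p)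
  rw [hL, ← hR]
  exact h

end Scalar

section Transfer

variable {p : ℝ}

set_option maxHeartbeats 1600000 in
/-- The transference inequality: if `U` has uniformly bounded powers on `L^p(Ω')`, then
`‖φ(U)x‖ ≤ K² ‖φ(S)‖ ‖x‖`. -/
lemma transfer {Ω' : Type} [MeasurableSpace Ω'] {μ' : Measure Ω'} (hp : 1 < p)
    [Fact (1 ≤ ENNReal.ofReal p)]
    (U : Lp ℂ (ENNReal.ofReal p) μ' ≃L[ℂ] Lp ℂ (ENNReal.ofReal p) μ')
    {K : ℝ} (hK : ∀ n : ℤ, ‖(U ^ n).toContinuousLinearMap‖ ≤ K)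
    (φ : Polynomial ℂ) (x : Lp ℂ (ENNReal.ofReal p) μ') :
    ‖∑ n ∈ Finset.range (φ.natDegree + 1),
        φ.coeff n • ((U ^ (n : ℤ)).toContinuousLinearMap x)‖
      ≤ K ^ 2 * ‖aeval (shiftOp (ENNReal.ofReal p)) φ‖ * ‖x‖ := by
  classical
  have hp0 : 0 < p := lt_trans one_pos hp
  set d := φ.natDegree with hd
  set A : ℝ≥0∞ := (‖aeval (shiftOp (ENNReal.ofReal p)) φ‖₊ : ℝ≥0∞) with hA
  set Ke : ℝ≥0∞ := ENNReal.ofReal K with hKe1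
  have hK0 : 0 ≤ K := le_trans (norm_nonneg _) (hK 0)
  have hKe : ∀ n : ℤ, (‖(U ^ n).toContinuousLinearMap‖₊ : ℝ≥0∞) ≤ Ke := by
    intro n
    rw [← enorm_eq_nnnorm, ← ofReal_norm]
    exact ENNReal.ofReal_le_ofReal (hK n)
  have hKetop : Ke ≠ ⊤ := ENNReal.ofReal_ne_top
  set F : ℤ → Lp ℂ (ENNReal.ofReal p) μ' := fun j => (U ^ j).toContinuousLinearMap x with hF
  set v : Lp ℂ (ENNReal.ofReal p) μ' := ∑ n ∈ Finset.range (d + 1), φ.coeff n • F (n : ℤ) with hv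
  set Np : Lp ℂ (ENNReal.ofReal p) μ' → ℝ≥0∞ := fun g => (‖g‖₊ : ℝ≥0∞) ^ p with hNpdef
  have hNptop : ∀ g, Np g ≠ ⊤ := fun g =>
    (ENNReal.rpow_lt_top_of_nonneg hp0.le ENNReal.coe_ne_top).ne
  have hNpop : ∀ (B : Lp ℂ (ENNReal.ofReal p) μ' →L[ℂ] Lp ℂ (ENNReal.ofReal p) μ') (g : Lp ℂ (ENNReal.ofReal p) μ'),
      Np (B g) ≤ (‖B‖₊ : ℝ≥0∞) ^ p * Np g := by
    intro B g
    rw [hNpdef]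
    simp only []
    rw [← ENNReal.mul_rpow_of_nonneg _ _ hp0.le]
    exact ENNReal.rpow_le_rpow (by exact_mod_cast B.le_opNNNorm g) hp0.le
  -- expansion of `U^m v`
  have hUm : ∀ m : ℤ, (U ^ m) v = ∑ n ∈ Finset.range (d + 1), φ.coeff n • F (m + n) := by
    intro m
    rw [hv, map_sum]
    refine Finset.sum_congr rfl fun n _ => ?_
    rw [_root_.map_smul]
    congr 1
    show (U ^ m) ((U ^ (n : ℤ)) x) = (U ^ (m + n)) x
    rw [zpow_add]
    rfl
  -- bound on each `Np (F j)`
  have hNpF : ∀ j : ℤ, Np (F j) ≤ Ke ^ p * Np x := by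
    intro j
    refine le_trans (hNpop (U ^ j).toContinuousLinearMap x) ?_
    exact mul_le_mul_left (ENNReal.rpow_le_rpow (hKe j) hp0.le) _
  -- a.e. representation of `U^m v`
  have hae : ∀ m : ℤ, ⇑((U ^ m) v) =ᵐ[μ']
      fun ω => ∑ n ∈ Finset.range (d + 1), φ.coeff n • (F (m + n)) ω := by
    intro m
    rw [hUm m]
    exact coeFn_lp_smul_sum _ _ _
  have hrep : ∀ m : ℤ, Np ((U ^ m) v)
      = ∫⁻ ω, (‖∑ n ∈ Finset.range (d + 1), φ.coeff n • (F (m + n)) ω‖₊ : ℝ≥0∞) ^ p ∂μ' := by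
    intro m
    rw [hNpdef]
    simp only []
    rw [← lintegral_rpow_eq hp0 ((U ^ m) v)]
    refine lintegral_congr_ae ((hae m).mono fun ω hω => ?_)
    simp only []
    rw [hω]
  have hmeas : ∀ m : ℤ, AEMeasurable
      (fun ω => (‖∑ n ∈ Finset.range (d + 1), φ.coeff n • (F (m + n)) ω‖₊ : ℝ≥0∞) ^ p) μ' := by
    intro m
    refine AEMeasurable.congr (((Lp.aestronglyMeasurable ((U ^ m) v)).enorm.pow_const p))
      ((hae m).mono fun ω hω => ?_)
    simp only []
    rw [hω]
    rfl
  have hmeasF : ∀ j : ℤ, AEMeasurable (fun ω => (‖(F j) ω‖₊ : ℝ≥0∞) ^ p) μ' :=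
    fun j => (Lp.aestronglyMeasurable (F j)).enorm.pow_const p
  -- the main estimate for each N
  have main : ∀ N : ℕ, ((2 * N + 1 : ℕ) : ℝ≥0∞) * Np v
      ≤ ((2 * N + 2 * d + 1 : ℕ) : ℝ≥0∞) * (Ke ^ p * A ^ p * Ke ^ p * Np x) := by
    intro N
    have hcard1 : ((Finset.Icc (-(N : ℤ)) (N : ℤ)).card : ℝ≥0∞) = ((2 * N + 1 : ℕ) : ℝ≥0∞) := by
      rw [Int.card_Icc]
      congr 1
      omega
    have hcard2 : ((Finset.Icc (-(N : ℤ) - d) ((N : ℤ) + d)).card : ℝ≥0∞)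
        = ((2 * N + 2 * d + 1 : ℕ) : ℝ≥0∞) := by
      rw [Int.card_Icc]
      congr 1
      omega
    -- step 1 : (2N+1) * Np v ≤ Ke^p * ∑_m Np (U^m v)
    have h1 : ∀ m : ℤ, Np v ≤ Ke ^ p * Np ((U ^ m) v) := by
      intro m
      have hvv : (U ^ (-m)).toContinuousLinearMap ((U ^ m) v) = v := by
        show (U ^ (-m)) ((U ^ m) v) = v
        rw [show (U ^ (-m)) ((U ^ m) v) = (U ^ (-m + m)) v from by rw [zpow_add]; rfl]
        simp only [neg_add_cancel, zpow_zero]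
        rfl
      calc Np v = Np ((U ^ (-m)).toContinuousLinearMap ((U ^ m) v)) := by rw [hvv]
        _ ≤ (‖(U ^ (-m)).toContinuousLinearMap‖₊ : ℝ≥0∞) ^ p * Np ((U ^ m) v) := hNpop _ _
        _ ≤ Ke ^ p * Np ((U ^ m) v) :=
            mul_le_mul_left (ENNReal.rpow_le_rpow (hKe _) hp0.le) _
    have h2 : ((2 * N + 1 : ℕ) : ℝ≥0∞) * Np v
        ≤ Ke ^ p * ∑ m ∈ Finset.Icc (-(N : ℤ)) (N : ℤ), Np ((U ^ m) v) := by
      calc ((2 * N + 1 : ℕ) : ℝ≥0∞) * Np v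
          = ∑ _m ∈ Finset.Icc (-(N : ℤ)) (N : ℤ), Np v := by
            rw [Finset.sum_const, nsmul_eq_mul, hcard1]
        _ ≤ ∑ m ∈ Finset.Icc (-(N : ℤ)) (N : ℤ), Ke ^ p * Np ((U ^ m) v) :=
            Finset.sum_le_sum fun m _ => h1 m
        _ = Ke ^ p * ∑ m ∈ Finset.Icc (-(N : ℤ)) (N : ℤ), Np ((U ^ m) v) := by
            rw [Finset.mul_sum]
    -- step 2 : pointwise transference via the scalar inequality
    have hpoint : ∀ ω : Ω', (∑ m ∈ Finset.Icc (-(N : ℤ)) (N : ℤ),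
        (‖∑ n ∈ Finset.range (d + 1), φ.coeff n • (F (m + n)) ω‖₊ : ℝ≥0∞) ^ p)
        ≤ A ^ p * ∑ j ∈ Finset.Icc (-(N : ℤ) - d) ((N : ℤ) + d),
            (‖(F j) ω‖₊ : ℝ≥0∞) ^ p := by
      intro ω
      set c : ℤ → ℂ := fun j =>
        if j ∈ Finset.Icc (-(N : ℤ) - d) ((N : ℤ) + d) then (F j) ω else 0 with hcdef
      have hcsupp : ∀ j ∉ Finset.Icc (-(N : ℤ) - d) ((N : ℤ) + d), c j = 0 :=
        fun j hj => if_neg hj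
      have hceq : ∀ m ∈ Finset.Icc (-(N : ℤ)) (N : ℤ), ∀ n ∈ Finset.range (d + 1),
          c (m + n) = (F (m + n)) ω := by
        intro m hm n hn
        rw [hcdef]
        simp only []
        rw [if_pos]
        rw [Finset.mem_Icc] at hm ⊢
        rw [Finset.mem_range] at hn
        omega
      calc (∑ m ∈ Finset.Icc (-(N : ℤ)) (N : ℤ),
            (‖∑ n ∈ Finset.range (d + 1), φ.coeff n • (F (m + n)) ω‖₊ : ℝ≥0∞) ^ p)
          = ∑ m ∈ Finset.Icc (-(N : ℤ)) (N : ℤ),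
            (‖∑ n ∈ Finset.range (d + 1), φ.coeff n • c (m + n)‖₊ : ℝ≥0∞) ^ p := by
            refine Finset.sum_congr rfl fun m hm => ?_
            have hs : (∑ n ∈ Finset.range (d + 1), φ.coeff n • (F (m + n)) ω)
                = ∑ n ∈ Finset.range (d + 1), φ.coeff n • c (m + n) :=
              Finset.sum_congr rfl fun n hn => by rw [hceq m hm n hn]
            rw [hs]
        _ ≤ ∑' k : ℤ, (‖∑ n ∈ Finset.range (d + 1), φ.coeff n • c (k + n)‖₊ : ℝ≥0∞) ^ p :=
            ENNReal.sum_le_tsum _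
        _ ≤ (‖aeval (shiftOp (ENNReal.ofReal p)) φ‖₊ : ℝ≥0∞) ^ p * ∑' k : ℤ, (‖c k‖₊ : ℝ≥0∞) ^ p :=
            scalar_plus hp φ c _ hcsupp
        _ = A ^ p * ∑ j ∈ Finset.Icc (-(N : ℤ) - d) ((N : ℤ) + d),
            (‖(F j) ω‖₊ : ℝ≥0∞) ^ p := by
            rw [tsum_eq_sum (s := Finset.Icc (-(N : ℤ) - d) ((N : ℤ) + d))
              (fun j hj => by simp [hcsupp j hj, ENNReal.zero_rpow_of_pos hp0])]
            congr 1
            refine Finset.sum_congr rfl fun j hj => ?_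
            rw [hcdef]
            simp only []
            rw [if_pos hj]
    have hAtop : A ^ p ≠ ⊤ :=
      (ENNReal.rpow_lt_top_of_nonneg hp0.le ENNReal.coe_ne_top).ne
    have h3 : ∑ m ∈ Finset.Icc (-(N : ℤ)) (N : ℤ), Np ((U ^ m) v)
        ≤ A ^ p * ∑ j ∈ Finset.Icc (-(N : ℤ) - d) ((N : ℤ) + d), Np (F j) := by
      calc ∑ m ∈ Finset.Icc (-(N : ℤ)) (N : ℤ), Np ((U ^ m) v)
          = ∫⁻ ω, ∑ m ∈ Finset.Icc (-(N : ℤ)) (N : ℤ),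
              (‖∑ n ∈ Finset.range (d + 1), φ.coeff n • (F (m + n)) ω‖₊ : ℝ≥0∞) ^ p ∂μ' := by
            rw [lintegral_finset_sum' _ (fun m _ => hmeas m)]
            exact Finset.sum_congr rfl fun m _ => hrep m
        _ ≤ ∫⁻ ω, A ^ p * ∑ j ∈ Finset.Icc (-(N : ℤ) - d) ((N : ℤ) + d),
              (‖(F j) ω‖₊ : ℝ≥0∞) ^ p ∂μ' := lintegral_mono fun ω => hpoint ω
        _ = A ^ p * ∑ j ∈ Finset.Icc (-(N : ℤ) - d) ((N : ℤ) + d), Np (F j) := by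
            rw [lintegral_const_mul' _ _ hAtop,
              lintegral_finset_sum' _ (fun j _ => hmeasF j)]
            congr 1
            exact Finset.sum_congr rfl fun j _ => lintegral_rpow_eq hp0 (F j)
    calc ((2 * N + 1 : ℕ) : ℝ≥0∞) * Np v
        ≤ Ke ^ p * ∑ m ∈ Finset.Icc (-(N : ℤ)) (N : ℤ), Np ((U ^ m) v) := h2
      _ ≤ Ke ^ p * (A ^ p * ∑ j ∈ Finset.Icc (-(N : ℤ) - d) ((N : ℤ) + d), Np (F j)) :=
          mul_le_mul_right h3 _
      _ ≤ Ke ^ p * (A ^ p * ∑ _j ∈ Finset.Icc (-(N : ℤ) - d) ((N : ℤ) + d), Ke ^ p * Np x) :=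
          mul_le_mul_right (mul_le_mul_right (Finset.sum_le_sum fun j _ => hNpF j) _) _
      _ = ((2 * N + 2 * d + 1 : ℕ) : ℝ≥0∞) * (Ke ^ p * A ^ p * Ke ^ p * Np x) := by
          rw [Finset.sum_const, nsmul_eq_mul, hcard2]
          ring
  -- pass to the limit in N
  set B : ℝ≥0∞ := Ke ^ p * A ^ p * Ke ^ p * Np x with hB
  have hNv : Np v ≤ B := by
    by_cases hBtop : B = ⊤
    · rw [hBtop]; exact le_top
    have hvfin : Np v ≠ ⊤ := hNptop v
    have hR : ∀ N : ℕ, (2 * (N : ℝ) + 1) * (Np v).toReal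
        ≤ (2 * (N : ℝ) + 2 * (d : ℝ) + 1) * B.toReal := by
      intro N
      have h := main N
      have htop : ((2 * N + 2 * d + 1 : ℕ) : ℝ≥0∞) * B ≠ ⊤ :=
        ENNReal.mul_ne_top (ENNReal.natCast_ne_top _) hBtop
      have h' := ENNReal.toReal_mono htop h
      rw [ENNReal.toReal_mul, ENNReal.toReal_mul, ENNReal.toReal_natCast,
        ENNReal.toReal_natCast] at h'
      push_cast at h'
      linarith
    have hbc0 : 0 ≤ B.toReal := ENNReal.toReal_nonneg
    have hnvbc : (Np v).toReal ≤ B.toReal := by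
      by_contra hcon
      push_neg at hcon
      obtain ⟨N, hN⟩ := exists_nat_gt
        ((2 * (d : ℝ) + 1) * B.toReal / ((Np v).toReal - B.toReal))
      have h1 := hR N
      have hpos : (0 : ℝ) < (Np v).toReal - B.toReal := by linarith
      rw [div_lt_iff₀ hpos] at hN
      have e1 : (2 * (N : ℝ) + 1) * ((Np v).toReal - B.toReal)
          ≤ 2 * (d : ℝ) * B.toReal := by nlinarith
      have e2 : (N : ℝ) * ((Np v).toReal - B.toReal)
          ≤ (2 * (N : ℝ) + 1) * ((Np v).toReal - B.toReal) := by
        have hN0 : (0 : ℝ) ≤ (N : ℝ) := Nat.cast_nonneg N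
        nlinarith
      linarith
    exact (ENNReal.toReal_le_toReal hvfin hBtop).mp hnvbc
  -- extract the norm inequality
  have hcomb : B = (Ke * A * Ke * (‖x‖₊ : ℝ≥0∞)) ^ p := by
    rw [hB, hNpdef]
    simp only []
    rw [ENNReal.mul_rpow_of_nonneg _ _ hp0.le, ENNReal.mul_rpow_of_nonneg _ _ hp0.le,
      ENNReal.mul_rpow_of_nonneg _ _ hp0.le]
  have hv2 : (‖v‖₊ : ℝ≥0∞) ≤ Ke * A * Ke * (‖x‖₊ : ℝ≥0∞) := by
    have h := ENNReal.rpow_le_rpow hNv (inv_nonneg.mpr hp0.le)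
    rw [hcomb] at h
    rwa [ENNReal.rpow_rpow_inv hp0.ne', ENNReal.rpow_rpow_inv hp0.ne'] at h
  have hreal : ENNReal.ofReal ‖v‖
      ≤ ENNReal.ofReal (K * (‖aeval (shiftOp (ENNReal.ofReal p)) φ‖ * (K * ‖x‖))) := by
    rw [ENNReal.ofReal_mul hK0, ENNReal.ofReal_mul (norm_nonneg _), ENNReal.ofReal_mul hK0]
    rw [ofReal_norm, ofReal_norm, ofReal_norm, enorm_eq_nnnorm, enorm_eq_nnnorm, enorm_eq_nnnorm]
    calc (‖v‖₊ : ℝ≥0∞) ≤ Ke * A * Ke * (‖x‖₊ : ℝ≥0∞) := hv2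
      _ = Ke * ((‖aeval (shiftOp (ENNReal.ofReal p)) φ‖₊ : ℝ≥0∞) * (Ke * (‖x‖₊ : ℝ≥0∞))) := by
          rw [hA]; ring
  have hfinal : ‖v‖ ≤ K * (‖aeval (shiftOp (ENNReal.ofReal p)) φ‖ * (K * ‖x‖)) := by
    refine (ENNReal.ofReal_le_ofReal_iff ?_).mp hreal
    positivity
  show ‖v‖ ≤ K ^ 2 * ‖aeval (shiftOp (ENNReal.ofReal p)) φ‖ * ‖x‖
  calc ‖v‖ ≤ K * (‖aeval (shiftOp (ENNReal.ofReal p)) φ‖ * (K * ‖x‖)) := hfinal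
    _ = K ^ 2 * ‖aeval (shiftOp (ENNReal.ofReal p)) φ‖ * ‖x‖ := by ring

end Transfer

/-- if a bounded operator `T` on `L^p(Ω)`, `1 < p < ∞`, admits a loose dilation,
then it is `p`-polynomially bounded: `‖φ(T)‖ ≤ C ‖φ(S)‖` for every polynomial `φ`, where `S`
is the shift on `ℓ^p(ℤ)`. -/
theorem stmt_9 {Ω : Type*} [MeasurableSpace Ω] (μ : Measure Ω) (p : ℝ) (hp : 1 < p) :
    letI : Fact (1 ≤ ENNReal.ofReal p) :=
      ⟨by rw [← ENNReal.ofReal_one]; exact ENNReal.ofReal_le_ofReal hp.le⟩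
    ∀ T : Lp ℂ (ENNReal.ofReal p) μ →L[ℂ] Lp ℂ (ENNReal.ofReal p) μ,
      LooseDilation (ENNReal.ofReal p) T →
        ∃ C : ℝ, 1 ≤ C ∧ ∀ φ : Polynomial ℂ,
          ‖aeval T φ‖ ≤ C * ‖aeval (shiftOp (ENNReal.ofReal p)) φ‖ := by
  haveI : Fact (1 ≤ ENNReal.ofReal p) :=
    ⟨by rw [← ENNReal.ofReal_one]; exact ENNReal.ofReal_le_ofReal hp.le⟩
  intro T hT
  obtain ⟨Ω', _, μ', J, Q, U, ⟨K, hK⟩, hdil⟩ := hT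
  have hK0 : 0 ≤ K := le_trans (norm_nonneg _) (hK 0)
  refine ⟨max 1 (‖Q‖ * K ^ 2 * ‖J‖), le_max_left _ _, fun φ => ?_⟩
  have hAr : (0:ℝ) ≤ ‖aeval (shiftOp (ENNReal.ofReal p)) φ‖ := norm_nonneg _
  have happ : ∀ y, (aeval T φ) y
      = Q (∑ n ∈ Finset.range (φ.natDegree + 1),
          φ.coeff n • ((U ^ (n : ℤ)).toContinuousLinearMap (J y))) := by
    intro y
    rw [aeval_eq_sum_range, map_sum, ContinuousLinearMap.sum_apply]
    refine Finset.sum_congr rfl fun n _ => ?_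
    rw [ContinuousLinearMap.smul_apply, hdil n]
    show φ.coeff n • Q ((U ^ (n : ℤ)).toContinuousLinearMap (J y))
      = Q (φ.coeff n • (U ^ (n : ℤ)).toContinuousLinearMap (J y))
    exact (_root_.map_smul Q _ _).symm
  have hb : ∀ y, ‖(aeval T φ) y‖
      ≤ (‖Q‖ * K ^ 2 * ‖J‖) * ‖aeval (shiftOp (ENNReal.ofReal p)) φ‖ * ‖y‖ := by
    intro y
    rw [happ y]
    calc ‖Q _‖ ≤ ‖Q‖ * ‖∑ n ∈ Finset.range (φ.natDegree + 1),
        φ.coeff n • ((U ^ (n : ℤ)).toContinuousLinearMap (J y))‖ := Q.le_opNorm _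
      _ ≤ ‖Q‖ * (K ^ 2 * ‖aeval (shiftOp (ENNReal.ofReal p)) φ‖ * ‖J y‖) :=
          mul_le_mul_of_nonneg_left (transfer hp U hK φ (J y)) (norm_nonneg _)
      _ ≤ ‖Q‖ * (K ^ 2 * ‖aeval (shiftOp (ENNReal.ofReal p)) φ‖ * (‖J‖ * ‖y‖)) := by
          refine mul_le_mul_of_nonneg_left ?_ (norm_nonneg _)
          refine mul_le_mul_of_nonneg_left (J.le_opNorm y) ?_
          positivity
      _ = (‖Q‖ * K ^ 2 * ‖J‖) * ‖aeval (shiftOp (ENNReal.ofReal p)) φ‖ * ‖y‖ := by ring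
  have hop : ‖aeval T φ‖
      ≤ (‖Q‖ * K ^ 2 * ‖J‖) * ‖aeval (shiftOp (ENNReal.ofReal p)) φ‖ :=
    ContinuousLinearMap.opNorm_le_bound _ (by positivity) hb
  refine le_trans hop ?_
  gcongr
  exact le_max_right _ _
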